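/- arXiv:1903.05332 — 7 statements merged into one kernel-verified Lean document; each statement's English description precedes it below -/
import Mathlib

section
/- Let D be a bipartite tournament with bipartition (V_1,V_2) and sink elimination index \zeta(D) >= 1. Then the union of the even-indexed sets W_0, W_2, ... of the sink sequence is contained in one partite set and the union of the odd-indexed sets W_1, W_3, ... is contained in the other partite set. -/
/-- `walkN D n u v` : there is a directed walk of length `n` from `u` to `v` in the digraph `D`. -/
def walkN {V : Type*} (D : V → V → Prop) : ℕ → V → V → Prop
  | 0 => fun u v => u = v
  | n+1 => fun u v => ∃ w, D u w ∧ walkN D n w v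

/-- The `m`-step competition graph of the digraph `D`. -/
def cmGraph {V : Type*} (D : V → V → Prop) (m : ℕ) : SimpleGraph V where
  Adj u v := u ≠ v ∧ ∃ z, walkN D m u z ∧ walkN D m v z
  symm := by
    constructor
    intro u v h
    exact ⟨Ne.symm h.1, h.2.imp fun z hz => ⟨hz.2, hz.1⟩⟩
  loopless := by constructor; intro v h; exact h.1 rfl

/-- Sinks of the subdigraph of `D` induced by `S`. -/
def sinks {V : Type*} (D : V → V → Prop) (S : Set V) : Set V :=
  {v ∈ S | ∀ w ∈ S, ¬ D v w}

/-- The digraph sequence `D_0, D_1, …` (as vertex sets) associated with the sink sequence. -/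
def Dseq {V : Type*} (D : V → V → Prop) : ℕ → Set V
  | 0 => Set.univ
  | n+1 => Dseq D n \ sinks D (Dseq D n)

/-- The sink sequence `W_0, W_1, …` of `D`. -/
def Wseq {V : Type*} (D : V → V → Prop) (n : ℕ) : Set V := sinks D (Dseq D n)

/-- `k` is the sink elimination index `ζ(D)`. -/
def IsSinkElimIndex {V : Type*} (D : V → V → Prop) (k : ℕ) : Prop :=
  (Wseq D k = Dseq D k ∨ Wseq D k = ∅) ∧
  ∀ j < k, Wseq D j ≠ Dseq D j ∧ Wseq D j ≠ ∅

/-- A digraph is acyclic iff it has no directed closed walk of positive length. -/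
def DigraphAcyclic {V : Type*} (D : V → V → Prop) : Prop :=
  ∀ v : V, ∀ n : ℕ, 0 < n → ¬ walkN D n v v

/-- `D` is a bipartite tournament with bipartition `(V1, V2)`. -/
structure IsBipartiteTournament {V : Type*} (D : V → V → Prop) (V1 V2 : Set V) : Prop where
  nonempty1 : V1.Nonempty
  nonempty2 : V2.Nonempty
  union_eq : V1 ∪ V2 = Set.univ
  disj : V1 ∩ V2 = ∅
  oriented : ∀ x ∈ V1, ∀ y ∈ V2, Xor' (D x y) (D y x)
  no_intra : ∀ x y, D x y → (x ∈ V1 ∧ y ∈ V2) ∨ (x ∈ V2 ∧ y ∈ V1)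

/-- The competition graph sequence of `D` is eventually equal, starting from `q`. -/
def PeriodicFrom {V : Type*} (D : V → V → Prop) (q : ℕ) : Prop :=
  ∃ r, 0 < r ∧ ∀ i : ℕ, cmGraph D (q + i) = cmGraph D (q + r + i)

/-- `q` is the competition index of `D`. -/
def IsCindex {V : Type*} (D : V → V → Prop) (q : ℕ) : Prop :=
  0 < q ∧ PeriodicFrom D q ∧ ∀ q', 0 < q' → PeriodicFrom D q' → q ≤ q'

/-- `p` is the competition period of `D`, given that `q` is its competition index. -/
def IsCperiod {V : Type*} (D : V → V → Prop) (q p : ℕ) : Prop :=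
  0 < p ∧ cmGraph D q = cmGraph D (q + p) ∧
    ∀ p', 0 < p' → cmGraph D q = cmGraph D (q + p') → p ≤ p'

/-!
A vertex of `W (i+1)` is not a sink of `D_i`, so it has an out-neighbour in `D_i`; since it is a
sink of `D_(i+1) = D_i - W_i`, that out-neighbour lies in `W_i`. Every arc joins the two partite
sets, so `W (i+1)` lies in the partite set opposite to the one containing `W_i`. The sinks `W_0`
of `D` lie in a single partite set because any two vertices from different sides are joined by
an arc.
-/

section SinkSequence

variable {V : Type*} {D : V → V → Prop} {A B : Set V}

lemma Wseq_succ_subset (hcross : ∀ x y, D x y → (x ∈ A ∧ y ∈ B) ∨ (x ∈ B ∧ y ∈ A))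
    (hdisj : Disjoint A B) {i : ℕ} (hW : Wseq D i ⊆ A) : Wseq D (i + 1) ⊆ B := by
  rintro v ⟨⟨hvD, hvW⟩, hsink⟩
  obtain ⟨w, hwD, hvw⟩ : ∃ w ∈ Dseq D i, D v w := by
    by_contra! h
    exact hvW ⟨hvD, h⟩
  rcases hcross v w hvw with ⟨-, hwB⟩ | ⟨hvB, -⟩
  · have hwW : w ∈ Wseq D i := by_contra fun h => hsink w ⟨hwD, h⟩ hvw
    exact absurd hwB (hdisj.notMem_of_mem_left (hW hwW))
  · exact hvB

lemma Wseq_alternates_of_Wseq_zero_subset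
    (hcross : ∀ x y, D x y → (x ∈ A ∧ y ∈ B) ∨ (x ∈ B ∧ y ∈ A))
    (hdisj : Disjoint A B) (h0 : Wseq D 0 ⊆ A) (i : ℕ) :
    (Even i → Wseq D i ⊆ A) ∧ (Odd i → Wseq D i ⊆ B) := by
  induction i with
  | zero => exact ⟨fun _ => h0, fun h => absurd h Nat.not_odd_zero⟩
  | succ n ih =>
    rw [Nat.even_add_one, Nat.odd_add_one, Nat.not_even_iff_odd, Nat.not_odd_iff_even]
    exact ⟨fun h => Wseq_succ_subset (fun x y hxy => (hcross x y hxy).symm) hdisj.symm (ih.2 h),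
      fun h => Wseq_succ_subset hcross hdisj (ih.1 h)⟩

lemma IsBipartiteTournament.Wseq_zero_subset {V1 V2 : Set V}
    (hD : IsBipartiteTournament D V1 V2) : Wseq D 0 ⊆ V1 ∨ Wseq D 0 ⊆ V2 := by
  by_contra! h
  obtain ⟨⟨x, hxW, hx1⟩, ⟨y, hyW, hy2⟩⟩ := And.imp Set.not_subset.mp Set.not_subset.mp h
  have hx2 : x ∈ V2 := ((hD.union_eq ▸ Set.mem_univ x : x ∈ V1 ∪ V2)).resolve_left hx1
  have hy1 : y ∈ V1 := ((hD.union_eq ▸ Set.mem_univ y : y ∈ V1 ∪ V2)).resolve_right hy2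
  rcases hD.oriented y hy1 x hx2 with ⟨hyx, -⟩ | ⟨hxy, -⟩
  · exact hyW.2 x trivial hyx
  · exact hxW.2 y trivial hxy

end SinkSequence

theorem sink_sequence_alternates_general {V : Type*} (D : V → V → Prop)
    (V1 V2 : Set V) (hD : IsBipartiteTournament D V1 V2)
    (k : ℕ) :
    (∀ i ≤ k, (Even i → Wseq D i ⊆ V1) ∧ (Odd i → Wseq D i ⊆ V2)) ∨
    (∀ i ≤ k, (Even i → Wseq D i ⊆ V2) ∧ (Odd i → Wseq D i ⊆ V1)) := by
  have hdisj : Disjoint V1 V2 := Set.disjoint_iff_inter_eq_empty.mpr hD.disj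
  rcases hD.Wseq_zero_subset with h0 | h0
  · exact Or.inl fun i _ => Wseq_alternates_of_Wseq_zero_subset hD.no_intra hdisj h0 i
  · have hcross x y (hxy : D x y) := (hD.no_intra x y hxy).symm
    exact Or.inr fun i _ => Wseq_alternates_of_Wseq_zero_subset hcross hdisj.symm h0 i

/-- For a bipartite tournament with `ζ(D) ≥ 1`, the even-indexed sink-sequence
sets all lie in one partite set and the odd-indexed ones in the other. -/
theorem sink_sequence_alternates {V : Type*} [Fintype V] (D : V → V → Prop)
    (V1 V2 : Set V) (hD : IsBipartiteTournament D V1 V2)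
    (k : ℕ) (hk : IsSinkElimIndex D k) (hk1 : 1 ≤ k) :
    (∀ i ≤ k, (Even i → Wseq D i ⊆ V1) ∧ (Odd i → Wseq D i ⊆ V2)) ∨
    (∀ i ≤ k, (Even i → Wseq D i ⊆ V2) ∧ (Odd i → Wseq D i ⊆ V1)) :=
  sink_sequence_alternates_general D V1 V2 hD k
end

section
/- A bipartite tournament D with \zeta(D) >= 1 is acyclic if and only if the union of the even-indexed sink-sequence sets and the union of the odd-indexed sink-sequence sets are exactly the two partite sets of D. -/
/-!
Removing sinks layer by layer exhausts a finite digraph exactly when it is acyclic: along an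
edge `v → w` with `v ∈ W_i, w ∈ W_j` one has `j < i`, and conversely an acyclic digraph always
has a sink. In a bipartite tournament the sinks of any subdigraph lie in one part, since two sinks
in different parts would be joined by an arc; and once `W_i` lies in one part, a sink of `D_{i+1}`
in that same part would already have been a sink of `D_i`, so the layers alternate between parts.
-/

open Relation Set

section SinkSequence

variable {V : Type*} {D : V → V → Prop}

lemma walkN_of_transGen {u v : V} (h : TransGen D u v) : ∃ n, 0 < n ∧ walkN D n u v := by
  induction h using TransGen.head_induction_on with
  | single h => exact ⟨1, one_pos, v, h, rfl⟩
  | head h _ ih =>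
    obtain ⟨n, -, hn⟩ := ih
    exact ⟨n + 1, n.succ_pos, _, h, hn⟩

lemma DigraphAcyclic.wellFounded_swap [Finite V] (hac : DigraphAcyclic D) :
    WellFounded (Function.swap D) := by
  have : Std.Irrefl (TransGen (Function.swap D)) := ⟨fun v hv => by
    obtain ⟨n, hn, hw⟩ := walkN_of_transGen (transGen_swap.mp hv)
    exact hac v n hn hw⟩
  exact Subrelation.wf TransGen.single (Finite.wellFounded_of_trans_of_irrefl _)

lemma DigraphAcyclic.sinks_nonempty [Finite V] (hac : DigraphAcyclic D) {S : Set V}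
    (hS : S.Nonempty) : (sinks D S).Nonempty :=
  let ⟨v, hv, hmin⟩ := hac.wellFounded_swap.has_min S hS
  ⟨v, hv, hmin⟩

lemma digraphAcyclic_of_rank (r : V → ℕ) (hr : ∀ v w, D v w → r w < r v) :
    DigraphAcyclic D := by
  have hwalk : ∀ n (v u : V), walkN D n v u → r u + n ≤ r v := by
    intro n
    induction n with
    | zero => rintro v u rfl; rfl
    | succ n ih =>
      rintro v u ⟨w, hvw, hwu⟩
      have := ih w u hwu
      have := hr v w hvw
      omega
  intro v n hn hvv
  have := hwalk n v v hvv
  omega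

lemma Dseq_antitone : Antitone (Dseq D) :=
  antitone_nat_of_succ_le fun _ => sdiff_subset

lemma Wseq_subset_Dseq (n : ℕ) : Wseq D n ⊆ Dseq D n := sep_subset _ _

lemma exists_lt_mem_Wseq_of_notMem_Dseq {v : V} {n : ℕ} (hv : v ∉ Dseq D n) :
    ∃ j < n, v ∈ Wseq D j := by
  induction n with
  | zero => exact absurd (mem_univ v) hv
  | succ n ih =>
    by_cases hvn : v ∈ Dseq D n
    · exact ⟨n, n.lt_succ_self, not_not.mp fun hw => hv ⟨hvn, hw⟩⟩
    · obtain ⟨j, hj, hw⟩ := ih hvn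
      exact ⟨j, hj.trans n.lt_succ_self, hw⟩

lemma lt_of_mem_Wseq_of_adj {v w : V} {i j : ℕ} (hv : v ∈ Wseq D i) (hw : w ∈ Wseq D j)
    (hvw : D v w) : j < i := by
  by_contra! hij
  exact hv.2 w (Dseq_antitone hij (Wseq_subset_Dseq j hw)) hvw

lemma digraphAcyclic_of_forall_mem_Wseq (hcover : ∀ v, ∃ i, v ∈ Wseq D i) :
    DigraphAcyclic D := by
  classical
  exact digraphAcyclic_of_rank (fun v => Nat.find (hcover v)) fun v w hvw =>
    lt_of_mem_Wseq_of_adj (Nat.find_spec (hcover v)) (Nat.find_spec (hcover w)) hvw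

lemma DigraphAcyclic.Dseq_succ_eq_empty [Finite V] (hac : DigraphAcyclic D) {k : ℕ}
    (hk : Wseq D k = Dseq D k ∨ Wseq D k = ∅) : Dseq D (k + 1) = ∅ := by
  change Dseq D k \ Wseq D k = ∅
  rcases hk with hk | hk
  · rw [hk, sdiff_self]
  · have hDk : Dseq D k = ∅ := not_nonempty_iff_eq_empty.mp fun hne =>
      (hac.sinks_nonempty hne).ne_empty hk
    rw [hDk, empty_sdiff]

lemma DigraphAcyclic.exists_le_mem_Wseq [Finite V] (hac : DigraphAcyclic D) {k : ℕ}
    (hk : IsSinkElimIndex D k) (v : V) : ∃ i ≤ k, v ∈ Wseq D i := by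
  have hv : v ∉ Dseq D (k + 1) := by rw [hac.Dseq_succ_eq_empty hk.1]; exact id
  obtain ⟨i, hi, hw⟩ := exists_lt_mem_Wseq_of_notMem_Dseq hv
  exact ⟨i, Nat.lt_succ_iff.mp hi, hw⟩

end SinkSequence

lemma Set.eq_and_eq_of_subset_of_union_eq_univ {α : Type*} {A B S T : Set α} (hA : A ⊆ S)
    (hB : B ⊆ T) (hAB : A ∪ B = univ) (hST : Disjoint S T) : A = S ∧ B = T := by
  have hmem : ∀ v, v ∈ A ∨ v ∈ B := fun v => by rw [← mem_union, hAB]; trivial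
  exact ⟨hA.antisymm fun v hv => (hmem v).resolve_right fun hvB =>
      disjoint_left.mp hST hv (hB hvB),
    hB.antisymm fun v hv => (hmem v).resolve_left fun hvA => disjoint_left.mp hST (hA hvA) hv⟩

namespace IsBipartiteTournament

variable {V : Type*} {D : V → V → Prop} {V1 V2 : Set V}

lemma symm (hD : IsBipartiteTournament D V1 V2) : IsBipartiteTournament D V2 V1 where
  nonempty1 := hD.nonempty2
  nonempty2 := hD.nonempty1
  union_eq := by rw [union_comm, hD.union_eq]
  disj := by rw [inter_comm, hD.disj]
  oriented := fun x hx y hy => (hD.oriented y hy x hx).symm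
  no_intra := fun x y h => (hD.no_intra x y h).symm

lemma mem_or_mem (hD : IsBipartiteTournament D V1 V2) (v : V) : v ∈ V1 ∨ v ∈ V2 := by
  rw [← mem_union, hD.union_eq]; trivial

lemma notMem_right_of_mem_left (hD : IsBipartiteTournament D V1 V2) {v : V} (hv : v ∈ V1) :
    v ∉ V2 := fun hv' => (hD.disj.subset ⟨hv, hv'⟩ : v ∈ (∅ : Set V))

lemma not_adj_of_mem_left (hD : IsBipartiteTournament D V1 V2) {x y : V} (hx : x ∈ V1)
    (hy : y ∈ V1) : ¬ D x y := fun hxy => by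
  rcases hD.no_intra x y hxy with ⟨-, hy'⟩ | ⟨hx', -⟩
  · exact hD.notMem_right_of_mem_left hy hy'
  · exact hD.notMem_right_of_mem_left hx hx'

lemma sinks_subset_or_subset (hD : IsBipartiteTournament D V1 V2) (S : Set V) :
    sinks D S ⊆ V1 ∨ sinks D S ⊆ V2 := by
  rw [or_iff_not_imp_left, not_subset]
  rintro ⟨v, hv, hv1⟩ w hw
  replace hv1 := (hD.mem_or_mem v).resolve_left hv1
  refine (hD.mem_or_mem w).resolve_left fun hw1 => ?_
  rcases hD.oriented w hw1 v hv1 with ⟨hwv, -⟩ | ⟨hvw, -⟩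
  · exact hw.2 v hv.1 hwv
  · exact hv.2 w hw.1 hvw

lemma Wseq_succ_subset (hD : IsBipartiteTournament D V1 V2) {i : ℕ} (h : Wseq D i ⊆ V1) :
    Wseq D (i + 1) ⊆ V2 := by
  intro v hv
  refine (hD.mem_or_mem v).resolve_left fun hv1 => hv.1.2 ⟨hv.1.1, fun w hw => ?_⟩
  by_cases hwW : w ∈ Wseq D i
  · exact hD.not_adj_of_mem_left hv1 (h hwW)
  · exact hv.2 w ⟨hw, hwW⟩

lemma Wseq_subset_of_even_of_odd (hD : IsBipartiteTournament D V1 V2) (h0 : Wseq D 0 ⊆ V1)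
    (i : ℕ) : (Even i → Wseq D i ⊆ V1) ∧ (Odd i → Wseq D i ⊆ V2) := by
  induction i with
  | zero => exact ⟨fun _ => h0, fun h => absurd h Nat.not_odd_zero⟩
  | succ i ih =>
    refine ⟨fun he => hD.symm.Wseq_succ_subset (ih.2 ?_),
      fun ho => hD.Wseq_succ_subset (ih.1 ?_)⟩
    · exact Nat.not_even_iff_odd.mp (Nat.even_add_one.mp he)
    · exact Nat.not_odd_iff_even.mp (Nat.odd_add_one.mp ho)

lemma biUnion_Wseq_even_odd_eq (hD : IsBipartiteTournament D V1 V2) {k : ℕ}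
    (hcover : ∀ v, ∃ i ≤ k, v ∈ Wseq D i) (h0 : Wseq D 0 ⊆ V1) :
    (⋃ i ∈ {i | i ≤ k ∧ Even i}, Wseq D i) = V1 ∧
      (⋃ i ∈ {i | i ≤ k ∧ Odd i}, Wseq D i) = V2 := by
  have halt := hD.Wseq_subset_of_even_of_odd h0
  refine eq_and_eq_of_subset_of_union_eq_univ (iUnion₂_subset fun i hi => (halt i).1 hi.2)
    (iUnion₂_subset fun i hi => (halt i).2 hi.2) (eq_univ_of_forall fun v => ?_)
    (disjoint_iff_inter_eq_empty.mpr hD.disj)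
  obtain ⟨i, hik, hv⟩ := hcover v
  rcases Nat.even_or_odd i with hi | hi
  · exact Or.inl (mem_biUnion ⟨hik, hi⟩ hv)
  · exact Or.inr (mem_biUnion ⟨hik, hi⟩ hv)

end IsBipartiteTournament

theorem acyclic_iff_sink_unions_are_parts_general {V : Type*} [Fintype V] (D : V → V → Prop)
    (V1 V2 : Set V) (hD : IsBipartiteTournament D V1 V2)
    (k : ℕ) (hk : IsSinkElimIndex D k) :
    DigraphAcyclic D ↔
      (((⋃ i ∈ {i | i ≤ k ∧ Even i}, Wseq D i) = V1 ∧
        (⋃ i ∈ {i | i ≤ k ∧ Odd i}, Wseq D i) = V2) ∨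
       ((⋃ i ∈ {i | i ≤ k ∧ Even i}, Wseq D i) = V2 ∧
        (⋃ i ∈ {i | i ≤ k ∧ Odd i}, Wseq D i) = V1)) := by
  constructor
  · intro hac
    have hcover := hac.exists_le_mem_Wseq hk
    rcases hD.sinks_subset_or_subset (Dseq D 0) with h0 | h0
    · exact Or.inl (hD.biUnion_Wseq_even_odd_eq hcover h0)
    · exact Or.inr (hD.symm.biUnion_Wseq_even_odd_eq hcover h0)
  · intro hparts
    refine digraphAcyclic_of_forall_mem_Wseq fun v => ?_
    have hv : v ∈ (⋃ i ∈ {i | i ≤ k ∧ Even i}, Wseq D i) ∪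
        (⋃ i ∈ {i | i ≤ k ∧ Odd i}, Wseq D i) := by
      rcases hparts with ⟨hE, hO⟩ | ⟨hE, hO⟩
      · rw [hE, hO, hD.union_eq]; trivial
      · rw [hE, hO, union_comm, hD.union_eq]; trivial
    simp only [mem_union, mem_iUnion] at hv
    rcases hv with ⟨i, -, hi⟩ | ⟨i, -, hi⟩ <;> exact ⟨i, hi⟩

/-- A bipartite tournament with `ζ(D) ≥ 1` is acyclic iff the union of the
even-indexed sink-sequence sets and the union of the odd-indexed ones are exactly the
two partite sets. -/
theorem acyclic_iff_sink_unions_are_parts {V : Type*} [Fintype V] (D : V → V → Prop)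
    (V1 V2 : Set V) (hD : IsBipartiteTournament D V1 V2)
    (k : ℕ) (hk : IsSinkElimIndex D k) (hk1 : 1 ≤ k) :
    DigraphAcyclic D ↔
      (((⋃ i ∈ {i | i ≤ k ∧ Even i}, Wseq D i) = V1 ∧
        (⋃ i ∈ {i | i ≤ k ∧ Odd i}, Wseq D i) = V2) ∨
       ((⋃ i ∈ {i | i ≤ k ∧ Even i}, Wseq D i) = V2 ∧
        (⋃ i ∈ {i | i ≤ k ∧ Odd i}, Wseq D i) = V1)) :=
  acyclic_iff_sink_unions_are_parts_general D V1 V2 hD k hk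
end

section
/- Let D be a bipartite tournament with \zeta(D) >= 1 and sink sequence (W_0,...,W_{\zeta(D)}). If v_i \in W_i for each i = 0,...,l where 1 <= l < \zeta(D), then D contains the directed path v_l \to v_{l-1} \to ... \to v_1 \to v_0. -/
namespace IsBipartiteTournament

variable {V : Type*} {D : V → V → Prop} {V1 V2 : Set V}

theorem notMem_left_iff (hD : IsBipartiteTournament D V1 V2) {z : V} : z ∉ V1 ↔ z ∈ V2 := by
  have hz : z ∈ V1 ∪ V2 := hD.union_eq ▸ Set.mem_univ z
  have hdisj : z ∉ V1 ∩ V2 := hD.disj ▸ Set.notMem_empty z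
  exact ⟨hz.resolve_left, fun h h' => hdisj ⟨h', h⟩⟩

theorem mem_left_iff_notMem_left_of_adj (hD : IsBipartiteTournament D V1 V2) {x y : V}
    (h : D x y) : x ∈ V1 ↔ y ∉ V1 := by
  rcases hD.no_intra x y h with ⟨hx, hy⟩ | ⟨hx, hy⟩
  · exact iff_of_true hx (hD.notMem_left_iff.2 hy)
  · exact iff_of_false (hD.notMem_left_iff.2 hx) (not_not.2 hy)

theorem adj_or_adj_of_mem_left_iff_notMem_left (hD : IsBipartiteTournament D V1 V2) {x y : V}
    (h : x ∈ V1 ↔ y ∉ V1) : D x y ∨ D y x := by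
  by_cases hx : x ∈ V1
  · exact Xor.or (hD.oriented x hx y (hD.notMem_left_iff.1 (h.1 hx)))
  · have hy : y ∈ V1 := not_not.1 (mt h.2 hx)
    exact (Xor.or (hD.oriented y hy x (hD.notMem_left_iff.1 hx))).symm

end IsBipartiteTournament

section SinkSequence

variable {V : Type*} {D : V → V → Prop}

theorem exists_adj_mem_Wseq_of_mem_Wseq_succ {n : ℕ} {u : V} (hu : u ∈ Wseq D (n + 1)) :
    ∃ w ∈ Wseq D n, D u w := by
  obtain ⟨⟨hu_mem, hu_not_sink⟩, hu_sink⟩ := hu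
  obtain ⟨w, hw_mem, huw⟩ : ∃ w ∈ Dseq D n, D u w := by
    by_contra! h
    exact hu_not_sink ⟨hu_mem, h⟩
  refine ⟨w, ?_, huw⟩
  by_contra hw
  exact hu_sink w ⟨hw_mem, hw⟩ huw

theorem IsBipartiteTournament.adj_of_mem_Wseq_succ_of_mem_Wseq {V1 V2 : Set V}
    (hD : IsBipartiteTournament D V1 V2) {n : ℕ} {u x : V}
    (hu : u ∈ Wseq D (n + 1)) (hx : x ∈ Wseq D n) : D u x := by
  obtain ⟨w, hw, huw⟩ := exists_adj_mem_Wseq_of_mem_Wseq_succ hu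
  have hu_mem : u ∈ Dseq D n := hu.1.1
  have hx_w : ¬(x ∈ V1 ↔ w ∉ V1) := fun h =>
    (hD.adj_or_adj_of_mem_left_iff_notMem_left h).elim (hx.2 w hw.1) (hw.2 x hx.1)
  have hu_w : u ∈ V1 ↔ w ∉ V1 := hD.mem_left_iff_notMem_left_of_adj huw
  have hu_x : u ∈ V1 ↔ x ∉ V1 := by tauto
  exact (hD.adj_or_adj_of_mem_left_iff_notMem_left hu_x).resolve_right (hx.2 u hu_mem)

end SinkSequence

theorem directed_path_through_sink_sets_general {V : Type*} (D : V → V → Prop)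
    (V1 V2 : Set V) (hD : IsBipartiteTournament D V1 V2)
    (l : ℕ)
    (v : ℕ → V) (hv : ∀ i ≤ l, v i ∈ Wseq D i) :
    ∀ i < l, D (v (i + 1)) (v i) := fun i hi =>
  hD.adj_of_mem_Wseq_succ_of_mem_Wseq (hv (i + 1) hi) (hv i hi.le)

/-- In a bipartite tournament with `ζ(D) ≥ 1`, if `v_i ∈ W_i` for each
`i = 0, …, l` with `1 ≤ l < ζ(D)`, then `D` contains the directed path
`v_l → v_{l-1} → ⋯ → v_1 → v_0`. -/
theorem directed_path_through_sink_sets {V : Type*} [Fintype V] (D : V → V → Prop)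
    (V1 V2 : Set V) (hD : IsBipartiteTournament D V1 V2)
    (k : ℕ) (hk : IsSinkElimIndex D k) (hk1 : 1 ≤ k)
    (l : ℕ) (hl1 : 1 ≤ l) (hlk : l < k)
    (v : ℕ → V) (hv : ∀ i ≤ l, v i ∈ Wseq D i) :
    ∀ i < l, D (v (i + 1)) (v i) :=
  directed_path_through_sink_sets_general D V1 V2 hD l v hv
end

section
/- Let D be a bipartite tournament with bipartition (V_1,V_2), \zeta(D) >= 1, sink sequence (W_0,...,W_{\zeta(D)}), and suppose W_j \subset V_2 for even j. Then for each k' = 0,...,floor(\zeta(D)/2)-1, every vertex of W_{2k'+1} is an out-neighbor in D of every vertex of V_2 \setminus (W_0 \cup ... \cup W_{2k'}). -/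
/-!
A vertex `w` of `W_{2k'+1}` lies in `V1`: otherwise, having no out-neighbour in `W_{2k'} ⊆ V2`, it would
already be a sink of `D_{2k'}`. A vertex `v ∈ V2` outside `W_0 ∪ ⋯ ∪ W_{2k'}` is still in `D_{2k'+1}`,
where `w` is a sink, so the arc between `v` and `w` must point towards `w`.
-/

section SinkSequence

variable {V : Type*} {D : V → V → Prop}

lemma mem_Dseq_iff {n : ℕ} {v : V} : v ∈ Dseq D n ↔ ∀ i < n, v ∉ Wseq D i := by
  induction n with
  | zero => simp [Dseq]
  | succ n ih =>
    rw [Nat.forall_lt_succ_right, ← ih]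
    rfl

lemma disjoint_Wseq_succ {n : ℕ} {S : Set V} (hS : ∀ x ∈ S, ∀ y ∈ S, ¬ D x y)
    (hW : Wseq D n ⊆ S) : Disjoint (Wseq D (n + 1)) S := by
  refine Set.disjoint_left.2 fun w ⟨⟨hwD, hwW⟩, hsink⟩ hwS => hwW ⟨hwD, fun u hu huw => ?_⟩
  by_cases huW : u ∈ Wseq D n
  · exact hS w hwS u (hW huW) huw
  · exact hsink u ⟨hu, huW⟩ huw

end SinkSequence

namespace IsBipartiteTournament

variable {V : Type*} {D : V → V → Prop} {V1 V2 : Set V} {x y : V}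

lemma not_adj_of_mem_right (hD : IsBipartiteTournament D V1 V2) (hx : x ∈ V2) (hy : y ∈ V2) :
    ¬ D x y := fun hxy => by
  rcases hD.no_intra x y hxy with ⟨hx1, -⟩ | ⟨-, hy1⟩
  · exact hD.disj.subset ⟨hx1, hx⟩
  · exact hD.disj.subset ⟨hy1, hy⟩

lemma mem_left_of_notMem_right (hD : IsBipartiteTournament D V1 V2) (hx : x ∉ V2) : x ∈ V1 :=
  ((hD.union_eq ▸ Set.mem_univ x : x ∈ V1 ∪ V2)).resolve_right hx

lemma adj_of_not_adj (hD : IsBipartiteTournament D V1 V2) (hx : x ∈ V1) (hy : y ∈ V2)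
    (h : ¬ D x y) : D y x :=
  (Xor.or (hD.oriented x hx y hy)).resolve_left h

end IsBipartiteTournament

theorem odd_sink_set_outneighbor_general {V : Type*} (D : V → V → Prop)
    (V1 V2 : Set V) (hD : IsBipartiteTournament D V1 V2)
    (k : ℕ)
    (heven : ∀ j ≤ k, Even j → Wseq D j ⊆ V2) :
    ∀ k' : ℕ, 2 * k' + 2 ≤ k →
      ∀ w ∈ Wseq D (2 * k' + 1),
        ∀ v ∈ V2 \ (⋃ i ∈ Finset.range (2 * k' + 1), Wseq D i), D v w := by
  intro k' hk' w hw v ⟨hv2, hvW⟩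
  have hvD : v ∈ Dseq D (2 * k' + 1) :=
    mem_Dseq_iff.2 fun i hi hvi => hvW (Set.mem_biUnion (Finset.mem_range.2 hi) hvi)
  have hw1 : w ∈ V1 := by
    have hdisj := disjoint_Wseq_succ (fun _ hx _ hy => hD.not_adj_of_mem_right hx hy)
      (heven (2 * k') (by omega) (even_two_mul k'))
    exact hD.mem_left_of_notMem_right (Set.disjoint_left.1 hdisj hw)
  exact hD.adj_of_not_adj hw1 hv2 (hw.2 v hvD)

/-- In a bipartite tournament with `ζ(D) ≥ 1` in which `W_j ⊆ V2` for even `j`,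
for each `k' = 0, …, ⌊ζ(D)/2⌋ - 1`, every vertex of `W_{2k'+1}` is an out-neighbor of
every vertex of `V2 \ (W_0 ∪ ⋯ ∪ W_{2k'})`. -/
theorem odd_sink_set_outneighbor {V : Type*} [Fintype V] (D : V → V → Prop)
    (V1 V2 : Set V) (hD : IsBipartiteTournament D V1 V2)
    (k : ℕ) (hk : IsSinkElimIndex D k) (hk1 : 1 ≤ k)
    (heven : ∀ j ≤ k, Even j → Wseq D j ⊆ V2) :
    ∀ k' : ℕ, 2 * k' + 2 ≤ k →
      ∀ w ∈ Wseq D (2 * k' + 1),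
        ∀ v ∈ V2 \ (⋃ i ∈ Finset.range (2 * k' + 1), Wseq D i), D v w :=
  odd_sink_set_outneighbor_general D V1 V2 hD k heven
end

section
/- Let D be a bipartite tournament and M a positive integer. If C^M(D) has at least one edge, then C^m(D) has at least one edge for every positive integer m <= M. -/
/-! By induction it suffices to pass from `m + 1` to `m ≥ 1`. If `u ≠ v` reach a common vertex `z`
in `m + 1` steps through first steps `u₁` and `v₁`, then either `u₁ ≠ v₁` already compete in `m`
steps, or `u₁ = v₁`, and then `u` and `v` both reach in `m` steps the vertex preceding `z` on the
walk `u₁ ⇝ z`. -/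

section

variable {V : Type*} {D : V → V → Prop}

lemma walkN_succ_right {n : ℕ} {u v : V} :
    walkN D (n + 1) u v ↔ ∃ w, walkN D n u w ∧ D w v := by
  induction n generalizing u with
  | zero =>
    exact ⟨fun ⟨_, huw, hwv⟩ => ⟨u, rfl, hwv ▸ huw⟩, fun ⟨_, huw, hwv⟩ => ⟨v, huw ▸ hwv, rfl⟩⟩
  | succ k ih =>
    constructor
    · rintro ⟨w, huw, hwv⟩
      obtain ⟨y, hwy, hyv⟩ := ih.1 hwv
      exact ⟨y, ⟨w, huw, hwy⟩, hyv⟩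
    · rintro ⟨y, ⟨w, huw, hwy⟩, hyv⟩
      exact ⟨w, huw, ih.2 ⟨y, hwy, hyv⟩⟩

lemma exists_adj_cmGraph_of_adj_cmGraph_succ {m : ℕ} (hm : 0 < m) {u v : V}
    (huv : (cmGraph D (m + 1)).Adj u v) : ∃ x y, (cmGraph D m).Adj x y := by
  obtain ⟨hne, z, ⟨u₁, huu₁, hu₁z⟩, ⟨v₁, hvv₁, hv₁z⟩⟩ := huv
  by_cases hu₁v₁ : u₁ = v₁
  · subst hu₁v₁
    obtain ⟨k, rfl⟩ := Nat.exists_eq_add_of_lt hm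
    obtain ⟨y, hu₁y, -⟩ := walkN_succ_right.1 hu₁z
    exact ⟨u, v, hne, y, ⟨u₁, huu₁, hu₁y⟩, ⟨u₁, hvv₁, hu₁y⟩⟩
  · exact ⟨u₁, v₁, hu₁v₁, z, hu₁z, hv₁z⟩

end

theorem edge_exists_downward_general {V : Type*} (D : V → V → Prop)
    (M : ℕ) (hedge : ∃ u v : V, (cmGraph D M).Adj u v) :
    ∀ m : ℕ, 0 < m → m ≤ M → ∃ u v : V, (cmGraph D m).Adj u v := by
  intro m hm hmM
  induction M, hmM using Nat.le_induction with
  | base => exact hedge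
  | succ n hmn ih =>
    obtain ⟨u, v, huv⟩ := hedge
    exact ih (exists_adj_cmGraph_of_adj_cmGraph_succ (hm.trans_le hmn) huv)

/-- If `C^M(D)` of a bipartite tournament has an edge, then so does `C^m(D)`
for every positive integer `m ≤ M`. -/
theorem edge_exists_downward {V : Type*} [Fintype V] (D : V → V → Prop)
    (V1 V2 : Set V) (hD : IsBipartiteTournament D V1 V2)
    (M : ℕ) (hM : 0 < M) (hedge : ∃ u v : V, (cmGraph D M).Adj u v) :
    ∀ m : ℕ, 0 < m → m ≤ M → ∃ u v : V, (cmGraph D m).Adj u v :=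
  edge_exists_downward_general D M hedge
end

section
/- Let D be a bipartite tournament with no sinks (every vertex has outdegree at least one). If two vertices are adjacent in C^M(D) for some positive integer M, then they are adjacent in C^m(D) for every integer m >= M. -/
theorem walkN_add {V : Type*} {D : V → V → Prop} {a b : ℕ} {u w v : V}
    (h₁ : walkN D a u w) (h₂ : walkN D b w v) : walkN D (a + b) u v := by
  induction a generalizing u with
  | zero =>
    subst h₁
    simpa using h₂
  | succ a ih =>
    obtain ⟨x, hux, hxw⟩ := h₁
    rw [Nat.add_right_comm]
    exact ⟨x, hux, ih hxw⟩

theorem exists_walkN_of_forall_exists_adj {V : Type*} {D : V → V → Prop}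
    (hnosink : ∀ v : V, ∃ w : V, D v w) (n : ℕ) (u : V) : ∃ v, walkN D n u v := by
  induction n generalizing u with
  | zero => exact ⟨u, rfl⟩
  | succ n ih =>
    obtain ⟨w, huw⟩ := hnosink u
    obtain ⟨v, hwv⟩ := ih w
    exact ⟨v, w, huw, hwv⟩

theorem adjacency_upward_of_no_sinks_general {V : Type*} (D : V → V → Prop)
    (hnosink : ∀ v : V, ∃ w : V, D v w)
    (M : ℕ) (u v : V) (huv : (cmGraph D M).Adj u v) :
    ∀ m : ℕ, M ≤ m → (cmGraph D m).Adj u v := by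
  intro m hm
  obtain ⟨hne, z, huz, hvz⟩ := huv
  obtain ⟨k, rfl⟩ := Nat.exists_eq_add_of_le hm
  obtain ⟨z', hzz'⟩ := exists_walkN_of_forall_exists_adj hnosink k z
  exact ⟨hne, z', walkN_add huz hzz', walkN_add hvz hzz'⟩

/-- In a bipartite tournament with no sinks, adjacency in `C^M(D)` implies
adjacency in `C^m(D)` for every `m ≥ M`. -/
theorem adjacency_upward_of_no_sinks {V : Type*} [Fintype V] (D : V → V → Prop)
    (V1 V2 : Set V) (hD : IsBipartiteTournament D V1 V2)
    (hnosink : ∀ v : V, ∃ w : V, D v w)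
    (M : ℕ) (hM : 0 < M) (u v : V) (huv : (cmGraph D M).Adj u v) :
    ∀ m : ℕ, M ≤ m → (cmGraph D m).Adj u v :=
  adjacency_upward_of_no_sinks_general D hnosink M u v huv
end

section
/- Let D be an acyclic bipartite tournament. Then the competition period of D is 1, i.e., C^q(D) = C^{q+1}(D) where q is the competition index of D. -/
/-!
A walk of length at least `|V|` in a finite digraph repeats a vertex and so contains a closed
walk; in an acyclic digraph there is none, so `C^m(D)` is edgeless for `m ≥ |V|`. A sequence that
is periodic from `q` on and eventually edgeless is edgeless from `q` on, hence constant there.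
-/

section Walks

variable {V : Type*} {D : V → V → Prop}

lemma walkN_iff_exists_chain {n : ℕ} {u v : V} :
    walkN D n u v ↔ ∃ f : ℕ → V, f 0 = u ∧ f n = v ∧ ∀ i < n, D (f i) (f (i + 1)) := by
  induction n generalizing u with
  | zero => exact ⟨fun h => ⟨fun _ => u, rfl, h, by simp⟩, fun ⟨f, h0, h1, _⟩ => h0 ▸ h1⟩
  | succ n ih =>
    constructor
    · rintro ⟨w, huw, hwv⟩
      obtain ⟨f, rfl, rfl, hf⟩ := ih.1 hwv
      refine ⟨fun i => if i = 0 then u else f (i - 1), rfl, rfl, fun i hi => ?_⟩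
      cases i with
      | zero => simpa using huw
      | succ i => simpa using hf i (by omega)
    · rintro ⟨f, rfl, rfl, hf⟩
      exact ⟨f 1, hf 0 n.succ_pos,
        ih.2 ⟨fun i => f (i + 1), rfl, rfl, fun i hi => hf (i + 1) (by omega)⟩⟩

lemma walkN_of_chain {n a b : ℕ} {f : ℕ → V} (hf : ∀ i < n, D (f i) (f (i + 1)))
    (hab : a ≤ b) (hb : b ≤ n) : walkN D (b - a) (f a) (f b) :=
  walkN_iff_exists_chain.2
    ⟨fun i => f (a + i), rfl, by simp only [Nat.add_sub_cancel' hab],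
      fun i hi => hf (a + i) (by omega)⟩

lemma not_walkN_of_card_le [Fintype V] (hacyc : DigraphAcyclic D) {n : ℕ} {u v : V}
    (hn : Fintype.card V ≤ n) : ¬ walkN D n u v := by
  intro h
  obtain ⟨f, -, -, hf⟩ := walkN_iff_exists_chain.1 h
  -- two of the `n + 1 > card V` vertices `f 0, …, f n` coincide and close a cycle
  obtain ⟨a, ha, b, hb, hab, hfab⟩ := Finset.exists_ne_map_eq_of_card_lt_of_maps_to
    (s := Finset.range (n + 1)) (t := Finset.univ) (f := f)
    (by simpa [Nat.lt_succ_iff] using hn) (fun _ _ => Finset.mem_univ _)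
  rw [Finset.mem_range] at ha hb
  rcases hab.lt_or_gt with hlt | hlt
  · exact hacyc (f a) (b - a) (by omega) (hfab ▸ walkN_of_chain hf hlt.le (by omega))
  · exact hacyc (f b) (a - b) (by omega) (hfab ▸ walkN_of_chain hf hlt.le (by omega))

end Walks

section CompetitionGraphs

variable {V : Type*} [Fintype V] {D : V → V → Prop}

lemma cmGraph_eq_bot_of_card_le (hacyc : DigraphAcyclic D) {m : ℕ}
    (hm : Fintype.card V ≤ m) : cmGraph D m = ⊥ := by
  ext u v
  simp only [SimpleGraph.bot_adj, iff_false]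
  rintro ⟨-, z, huz, -⟩
  exact not_walkN_of_card_le hacyc hm huz

lemma cmGraph_eq_bot_of_periodicFrom (hacyc : DigraphAcyclic D) {q : ℕ}
    (hq : PeriodicFrom D q) (i : ℕ) : cmGraph D (q + i) = ⊥ := by
  obtain ⟨r, hr, hqr⟩ := hq
  have hper : Function.Periodic (fun i => cmGraph D (q + i)) r := fun i => by
    simp only [hqr i, ← add_assoc, add_right_comm q i r]
  calc cmGraph D (q + i) = cmGraph D (q + (i + Fintype.card V * r)) :=
        (hper.nat_mul (Fintype.card V) i).symm
    _ = ⊥ := cmGraph_eq_bot_of_card_le hacyc (by nlinarith [hr])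

end CompetitionGraphs

theorem cperiod_one_of_acyclic_general {V : Type*} [Fintype V] (D : V → V → Prop)
    (hacyc : DigraphAcyclic D)
    (q : ℕ) (hq : IsCindex D q) :
    cmGraph D q = cmGraph D (q + 1) ∧ ∀ p : ℕ, IsCperiod D q p → p = 1 := by
  have hbot := cmGraph_eq_bot_of_periodicFrom hacyc hq.2.1
  have hstable : cmGraph D q = cmGraph D (q + 1) := by
    simpa using (hbot 0).trans (hbot 1).symm
  exact ⟨hstable, fun p ⟨hp, _, hmin⟩ => le_antisymm (hmin 1 one_pos hstable) hp⟩

/-- An acyclic bipartite tournament has competition period 1; that is,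
`C^q(D) = C^{q+1}(D)` where `q` is the competition index of `D`. -/
theorem cperiod_one_of_acyclic {V : Type*} [Fintype V] (D : V → V → Prop)
    (V1 V2 : Set V) (hD : IsBipartiteTournament D V1 V2)
    (hacyc : DigraphAcyclic D)
    (q : ℕ) (hq : IsCindex D q) :
    cmGraph D q = cmGraph D (q + 1) ∧ ∀ p : ℕ, IsCperiod D q p → p = 1 :=
  cperiod_one_of_acyclic_general D hacyc q hq
end
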